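/- arXiv:2503.18806 — 5 statements merged into one kernel-verified Lean document; each statement's English description precedes it below -/
import Mathlib

section
/- Let E be a complete real Hilbert space, f, g : E → ℝ, and suppose g has gradient g'(x₁) at every point x₁ ∈ E. Then for every x ∈ E and z ∈ E, z ∈ ∂̂(f + g)(x) if and only if there exist z_f ∈ ∂̂f(x) and z_g ∈ ∂̂g(x) with z = z_f + z_g; that is, ∂̂(f + g)(x) = ∂̂f(x) + ∂̂g(x). -/
open Filter Topology Set
open scoped RealInnerProductSpace

variable {E : Type*} [NormedAddCommGroup E] [InnerProductSpace ℝ E]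

/-- The Fréchet subdifferential of `f` at `x`. -/
noncomputable def f_subdifferential (f : E → ℝ) (x : E) : Set E :=
  {u : E | Filter.liminf
    (fun y => (((f y - f x - ⟪u, y - x⟫) / ‖y - x‖ : ℝ) : EReal)) (𝓝[≠] x) ≥ 0}

/-- The limiting subdifferential of `f` at `x`. -/
noncomputable def subdifferential (f : E → ℝ) (x : E) : Set E :=
  {v₀ : E | ∃ u : ℕ → E, Tendsto u atTop (𝓝 x) ∧
    Tendsto (fun n => f (u n)) atTop (𝓝 (f x)) ∧
    ∃ v : ℕ → E, (∀ n, v n ∈ f_subdifferential f (u n)) ∧ Tendsto v atTop (𝓝 v₀)}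

lemma mem_f_subdifferential_iff (f : E → ℝ) (x u : E) :
    u ∈ f_subdifferential f x ↔
      ∀ ε : ℝ, 0 < ε → ∀ᶠ y in 𝓝[≠] x,
        -ε < (f y - f x - ⟪u, y - x⟫) / ‖y - x‖ := by
  rw [f_subdifferential, Set.mem_setOf_eq, ge_iff_le, le_liminf_iff]
  constructor
  · intro h ε hε
    have h' := h ((-ε : ℝ) : EReal) (by exact_mod_cast neg_lt_zero.mpr hε)
    filter_upwards [h'] with y hy
    exact_mod_cast hy
  · intro h b hb
    induction b using EReal.rec with
    | bot => exact Eventually.of_forall fun y => EReal.bot_lt_coe _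
    | coe r =>
        have hr : r < 0 := by exact_mod_cast hb
        filter_upwards [h (-r) (by linarith)] with y hy
        have : r < (f y - f x - ⟪u, y - x⟫) / ‖y - x‖ := by linarith
        exact_mod_cast this
    | top => exact absurd hb (by simp)

/-- The differentiability error quotient tends to 0. -/
lemma gradient_quot_small [CompleteSpace E] (g : E → ℝ) (g' : E) (x : E) (hg : HasGradientAt g g' x)
    {ε : ℝ} (hε : 0 < ε) :
    ∀ᶠ y in 𝓝[≠] x, |(g y - g x - ⟪g', y - x⟫) / ‖y - x‖| < ε := by
  have h := hg.hasFDerivAt.isLittleO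
  have h2 := h.def (half_pos hε)
  have h3 : ∀ᶠ y in 𝓝[≠] x,
      ‖g y - g x - ⟪g', y - x⟫‖ ≤ ε / 2 * ‖y - x‖ := by
    apply nhdsWithin_le_nhds
    filter_upwards [h2] with y hy
    simpa [InnerProductSpace.toDual_apply_apply] using hy
  filter_upwards [h3, self_mem_nhdsWithin] with y hy (hy' : y ≠ x)
  have hn : 0 < ‖y - x‖ := by
    rw [norm_pos_iff, sub_ne_zero]; exact hy'
  rw [abs_div, abs_of_pos hn, div_lt_iff₀ hn]
  calc |g y - g x - ⟪g', y - x⟫| ≤ ε / 2 * ‖y - x‖ := hy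
    _ < ε * ‖y - x‖ := by nlinarith

theorem f_subdiff_add [CompleteSpace E] (f g : E → ℝ) (g' : E → E)
    (hg : ∀ x₁ : E, HasGradientAt g (g' x₁) x₁) (x : E) (z : E) :
    z ∈ f_subdifferential (f + g) x ↔
      ∃ zf ∈ f_subdifferential f x, ∃ zg ∈ f_subdifferential g x, z = zf + zg := by
  have key : ∀ (u v : E) (y : E), y ≠ x →
      ((f + g) y - (f + g) x - ⟪u + v, y - x⟫) / ‖y - x‖
        = (f y - f x - ⟪u, y - x⟫) / ‖y - x‖ + (g y - g x - ⟪v, y - x⟫) / ‖y - x‖ := by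
    intro u v y _
    rw [← add_div]
    congr 1
    simp only [Pi.add_apply, inner_add_left]
    ring
  constructor
  · intro hz
    refine ⟨z - g' x, ?_, g' x, ?_, (sub_add_cancel z (g' x)).symm⟩
    · rw [mem_f_subdifferential_iff]
      intro ε hε
      rw [mem_f_subdifferential_iff] at hz
      filter_upwards [hz (ε / 2) (half_pos hε), gradient_quot_small g (g' x) x (hg x) (half_pos hε),
        self_mem_nhdsWithin] with y hy1 hy2 (hy' : y ≠ x)
      have hk := key (z - g' x) (g' x) y hy'
      rw [sub_add_cancel] at hk
      rw [hk] at hy1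
      have := abs_lt.mp hy2
      linarith [this.1]
    · rw [mem_f_subdifferential_iff]
      intro ε hε
      filter_upwards [gradient_quot_small g (g' x) x (hg x) hε] with y hy
      have := abs_lt.mp hy
      linarith [this.1]
  · rintro ⟨zf, hzf, zg, hzg, rfl⟩
    rw [mem_f_subdifferential_iff] at hzf hzg ⊢
    intro ε hε
    filter_upwards [hzf (ε / 2) (half_pos hε), hzg (ε / 2) (half_pos hε),
      self_mem_nhdsWithin] with y hy1 hy2 (hy' : y ≠ x)
    rw [key zf zg y hy']
    linarith
end

section
/- Let E be a complete real Hilbert space, f, g : E → ℝ, and suppose g has gradient g'(x₁) at every point x₁ ∈ E where the gradient map g' : E → E is continuous. Then for every x ∈ E and z ∈ E, z ∈ ∂(f + g)(x) if and only if there exist z_f ∈ ∂f(x) and z_g ∈ ∂g(x) with z = z_f + z_g; that is, ∂(f + g)(x) = ∂f(x) + ∂g(x). -/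
open Filter Topology Set
open scoped RealInnerProductSpace

variable {E : Type*} [NormedAddCommGroup E] [InnerProductSpace ℝ E]

lemma mem_fsub_iff (f : E → ℝ) (x u : E) :
    u ∈ f_subdifferential f x ↔
      ∀ ε : ℝ, 0 < ε → ∀ᶠ y in 𝓝[≠] x, -ε ≤ (f y - f x - ⟪u, y - x⟫) / ‖y - x‖ := by
  rw [f_subdifferential, Set.mem_setOf_eq, ge_iff_le, le_liminf_iff]
  constructor
  · intro h ε hε
    have h2 := h ((-ε : ℝ) : EReal) (by exact_mod_cast (by linarith : (-ε : ℝ) < 0))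
    filter_upwards [h2] with y hy
    exact le_of_lt (EReal.coe_lt_coe_iff.1 hy)
  · intro h b hb
    obtain ⟨r, hbr, hr0⟩ := EReal.exists_between_coe_real hb
    have h2 := h (-r) (by exact_mod_cast (by linarith [EReal.coe_lt_coe_iff.1 hr0] :
      (0:ℝ) < -r))
    filter_upwards [h2] with y hy
    calc b < (r : EReal) := hbr
      _ ≤ _ := by exact_mod_cast (by linarith : r ≤ (f y - f x - ⟪u, y - x⟫) / ‖y - x‖)

lemma grad_quot_tendsto [CompleteSpace E] {g : E → ℝ} {v y : E} (h : HasGradientAt g v y) :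
    Tendsto (fun y' => (g y' - g y - ⟪v, y' - y⟫) / ‖y' - y‖) (𝓝[≠] y) (𝓝 0) := by
  have h1 := h.hasFDerivAt.isLittleO
  have h2 : (fun y' => g y' - g y - ⟪v, y' - y⟫) =o[𝓝 y] fun y' => ‖y' - y‖ := by
    rw [Asymptotics.isLittleO_norm_right]
    simpa [InnerProductSpace.toDual_apply_apply] using h1
  exact (h2.tendsto_div_nhds_zero).mono_left nhdsWithin_le_nhds

lemma fsub_shift [CompleteSpace E] {g : E → ℝ} {g' : E → E} (f : E → ℝ) {y : E}
    (hgy : HasGradientAt g (g' y) y) (u : E) :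
    u ∈ f_subdifferential (f + g) y ↔ u - g' y ∈ f_subdifferential f y := by
  have hq : ∀ y' : E, ((f + g) y' - (f + g) y - ⟪u, y' - y⟫) / ‖y' - y‖ =
      (f y' - f y - ⟪u - g' y, y' - y⟫) / ‖y' - y‖ +
      (g y' - g y - ⟪g' y, y' - y⟫) / ‖y' - y‖ := by
    intro y'
    rw [← add_div, inner_sub_left]
    simp only [Pi.add_apply]
    ring_nf
  have hT := grad_quot_tendsto hgy
  rw [mem_fsub_iff, mem_fsub_iff]
  constructor
  · intro h ε hε
    have h1 := h (ε / 2) (by linarith)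
    have h2 : ∀ᶠ y' in 𝓝[≠] y, (g y' - g y - ⟪g' y, y' - y⟫) / ‖y' - y‖ < ε / 2 :=
      hT.eventually (eventually_lt_nhds (by linarith))
    filter_upwards [h1, h2] with y' h1 h2
    have := hq y'
    linarith
  · intro h ε hε
    have h1 := h (ε / 2) (by linarith)
    have h2 : ∀ᶠ y' in 𝓝[≠] y, -(ε / 2) < (g y' - g y - ⟪g' y, y' - y⟫) / ‖y' - y‖ :=
      hT.eventually (eventually_gt_nhds (by linarith))
    filter_upwards [h1, h2] with y' h1 h2
    have := hq y'
    linarith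

lemma grad_mem_fsub [CompleteSpace E] {g : E → ℝ} {v y : E} (h : HasGradientAt g v y) :
    v ∈ f_subdifferential g y := by
  rw [mem_fsub_iff]
  intro ε hε
  exact (grad_quot_tendsto h).eventually (eventually_ge_nhds (by linarith))

lemma fsub_grad_eq [CompleteSpace E] {g : E → ℝ} {v y : E} (h : HasGradientAt g v y) {u : E}
    (hu : u ∈ f_subdifferential g y) : u = v := by
  by_contra h0
  set w := u - v with hw_def
  have hw : w ≠ 0 := sub_ne_zero.2 h0
  have hwn : 0 < ‖w‖ := norm_pos_iff.2 hw
  set s : ℕ → E := fun n => y + (1 / (n + 1 : ℝ)) • w with hs_def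
  have hts : Tendsto s atTop (𝓝[≠] y) := by
    apply tendsto_nhdsWithin_of_tendsto_nhds_of_eventually_within
    · have h1 : Tendsto (fun n : ℕ => (1 / (n + 1 : ℝ)) • w) atTop (𝓝 ((0:ℝ) • w)) :=
        (tendsto_one_div_add_atTop_nhds_zero_nat).smul_const w
      have h2 := tendsto_const_nhds (x := y) (f := atTop (α := ℕ)) |>.add h1
      rw [hs_def]
      simpa using h2
    · filter_upwards with n
      simp only [s, Set.mem_compl_iff, Set.mem_singleton_iff, add_eq_left]
      exact smul_ne_zero (by positivity) hw
  have hkey : ∀ n : ℕ, (g (s n) - g y - ⟪u, s n - y⟫) / ‖s n - y‖ =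
      (g (s n) - g y - ⟪v, s n - y⟫) / ‖s n - y‖ - ‖w‖ := by
    intro n
    have ht : (0:ℝ) < 1 / (n + 1 : ℝ) := by positivity
    have hd : s n - y = (1 / (n + 1 : ℝ)) • w := by simp [s]
    have hnorm : ‖s n - y‖ = (1 / (n + 1 : ℝ)) * ‖w‖ := by
      rw [hd, norm_smul, Real.norm_eq_abs, abs_of_pos ht]
    have hinner : ⟪u, s n - y⟫ = ⟪v, s n - y⟫ + (1 / (n + 1 : ℝ)) * ‖w‖ ^ 2 := by
      have e1 : ⟪u, s n - y⟫ - ⟪v, s n - y⟫ = ⟪w, s n - y⟫ := by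
        rw [← inner_sub_left]
      have e2 : ⟪w, s n - y⟫ = (1 / (n + 1 : ℝ)) * ‖w‖ ^ 2 := by
        rw [hd, real_inner_smul_right, real_inner_self_eq_norm_sq]
      linarith
    rw [hinner, hnorm]
    field_simp
    ring
  have hquot : Tendsto (fun n => (g (s n) - g y - ⟪v, s n - y⟫) / ‖s n - y‖) atTop (𝓝 0) :=
    (grad_quot_tendsto h).comp hts
  have hev1 : ∀ᶠ n in atTop, (g (s n) - g y - ⟪v, s n - y⟫) / ‖s n - y‖ < ‖w‖ / 4 :=
    hquot.eventually (eventually_lt_nhds (by linarith))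
  have hev2 : ∀ᶠ n in atTop, -(‖w‖ / 2) ≤ (g (s n) - g y - ⟪u, s n - y⟫) / ‖s n - y‖ :=
    hts.eventually (((mem_fsub_iff g y u).1 hu) (‖w‖ / 2) (by linarith))
  obtain ⟨n, h1, h2⟩ := (hev1.and hev2).exists
  rw [hkey n] at h2
  linarith

theorem subdiff_add [CompleteSpace E] (f g : E → ℝ) (g' : E → E)
    (hg : ∀ x₁ : E, HasGradientAt g (g' x₁) x₁) (gradcon : Continuous g')
    (x : E) (z : E) :
    z ∈ subdifferential (f + g) x ↔
      ∃ zf ∈ subdifferential f x, ∃ zg ∈ subdifferential g x, z = zf + zg := by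
  have gcont : Continuous g := continuous_iff_continuousAt.2 fun y => (hg y).hasFDerivAt.continuousAt
  constructor
  · rintro ⟨u, hu, hfu, v, hv, hvz⟩
    refine ⟨z - g' x, ⟨u, hu, ?_, fun n => v n - g' (u n), fun n =>
      (fsub_shift f (hg (u n)) (v n)).1 (hv n), ?_⟩, g' x,
      ⟨fun _ => x, tendsto_const_nhds, tendsto_const_nhds, fun _ => g' x,
        fun _ => grad_mem_fsub (hg x), tendsto_const_nhds⟩, by abel⟩
    · have hgu : Tendsto (fun n => g (u n)) atTop (𝓝 (g x)) :=
        (gcont.tendsto x).comp hu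
      have : Tendsto (fun n => (f + g) (u n) - g (u n)) atTop (𝓝 ((f + g) x - g x)) :=
        hfu.sub hgu
      simpa using this
    · exact hvz.sub ((gradcon.tendsto x).comp hu)
  · rintro ⟨zf, ⟨u, hu, hfu, v, hv, hvzf⟩, zg, hzg, rfl⟩
    have hzg' : zg = g' x := by
      obtain ⟨u2, hu2, _, v2, hv2, hv2zg⟩ := hzg
      have heq : ∀ n, v2 n = g' (u2 n) := fun n => fsub_grad_eq (hg (u2 n)) (hv2 n)
      have : Tendsto (fun n => g' (u2 n)) atTop (𝓝 (g' x)) := (gradcon.tendsto x).comp hu2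
      have h2 : Tendsto v2 atTop (𝓝 (g' x)) := by
        simpa [funext heq] using this
      exact tendsto_nhds_unique hv2zg h2
    refine ⟨u, hu, ?_, fun n => v n + g' (u n), fun n =>
      (fsub_shift f (hg (u n)) (v n + g' (u n))).2 (by simpa using hv n), ?_⟩
    · have hgu : Tendsto (fun n => g (u n)) atTop (𝓝 (g x)) := (gcont.tendsto x).comp hu
      exact hfu.add hgu
    · rw [hzg']
      exact hvzf.add ((gradcon.tendsto x).comp hu)
end

section
/- Let E be a real Hilbert space, Ω ⊆ E a compact set, and f : E → ℝ a lower semicontinuous function that is constant on Ω and satisfies the KL property at every point of Ω. Then there exist ε > 0, η > 0, and a desingularizing function φ ∈ Φ_η such that for all u ∈ Ω and all x with dist(x, Ω) < ε and f(u) < f(x) < f(u) + η, one has φ'(f(x) - f(u)) · dist(0, ∂f(x)) ≥ 1. -/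
open Filter Topology Set
open scoped RealInnerProductSpace

variable {E : Type*} [NormedAddCommGroup E] [InnerProductSpace ℝ E]

/-- The family `Φ_η` of desingularizing functions: `φ : [0, η) → [0, ∞)` continuous
and concave on `[0, η)`, `φ 0 = 0`, continuously differentiable with positive
derivative on `(0, η)`. -/
def desingularizing_function (η : ℝ) : Set (ℝ → ℝ) :=
  {φ : ℝ → ℝ | ConcaveOn ℝ (Ico 0 η) φ ∧ ContinuousOn φ (Ico 0 η) ∧
    (∀ x ∈ Ico 0 η, 0 ≤ φ x) ∧ φ 0 = 0 ∧
    ContDiffOn ℝ 1 φ (Ioo 0 η) ∧ ∀ x ∈ Ioo 0 η, deriv φ x > 0}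

/-- `f` satisfies the Kurdyka–Łojasiewicz property at `u`. -/
noncomputable def KL_point (f : E → ℝ) (u : E) : Prop :=
  ∃ η ∈ Ioi (0 : ℝ), ∃ s ∈ 𝓝 u, ∃ φ ∈ desingularizing_function η,
    ∀ x ∈ s ∩ {y | f u < f y ∧ f y < f u + η},
      ENNReal.ofReal (deriv φ (f x - f u)) * EMetric.infEdist 0 (subdifferential f x) ≥ 1

lemma concaveOn_finset_sum' {ι : Type*} (t : Finset ι) {s : Set ℝ} (hs : Convex ℝ s)
    {f : ι → ℝ → ℝ} (h : ∀ i ∈ t, ConcaveOn ℝ s (f i)) :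
    ConcaveOn ℝ s (fun x => ∑ i ∈ t, f i x) := by
  classical
  induction t using Finset.induction with
  | empty => simpa using concaveOn_const (0:ℝ) hs
  | @insert a u hi ih =>
    simp only [Finset.sum_insert hi]
    exact (h a (Finset.mem_insert_self a u)).add
      (ih fun i hiu => h i (Finset.mem_insert_of_mem hiu))

theorem uniformized_KL_property (f : E → ℝ) (hf : LowerSemicontinuous f)
    (Ω : Set E) (h_compact : IsCompact Ω)
    (h_Ω1 : ∀ x ∈ Ω, KL_point f x)
    (h_Ω2 : ∃ c : ℝ, ∀ x ∈ Ω, f x = c) :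
    ∃ ε > (0 : ℝ), ∃ η > (0 : ℝ), ∃ φ ∈ desingularizing_function η,
      ∀ u ∈ Ω, ∀ x ∈ {y : E | Metric.infDist y Ω < ε} ∩ {y | f u < f y ∧ f y < f u + η},
        ENNReal.ofReal (deriv φ (f x - f u)) *
          EMetric.infEdist 0 (subdifferential f x) ≥ 1 := by
  rcases Ω.eq_empty_or_nonempty with hΩ | hΩne
  · refine ⟨1, one_pos, 1, one_pos, id, ⟨concaveOn_id (convex_Ico 0 1), continuousOn_id,
      fun x hx => hx.1, rfl, contDiffOn_id, fun x _ => by simp⟩, ?_⟩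
    intro u hu
    rw [hΩ] at hu
    exact absurd hu (notMem_empty u)
  · choose η hη s hs φ hφ hKL using h_Ω1
    obtain ⟨c, hc⟩ := h_Ω2
    obtain ⟨t, ht⟩ := h_compact.elim_nhds_subcover' (fun x hx => interior (s x hx))
      (fun x hx => isOpen_interior.mem_nhds (mem_interior_iff_mem_nhds.mpr (hs x hx)))
    have htne : t.Nonempty := by
      obtain ⟨u, hu⟩ := hΩne
      obtain ⟨i, hi, -⟩ := mem_iUnion₂.mp (ht hu)
      exact ⟨i, hi⟩
    have hopen : IsOpen (⋃ x ∈ t, interior (s x.1 x.2)) :=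
      isOpen_biUnion fun _ _ => isOpen_interior
    obtain ⟨ε, hε, hεsub⟩ := h_compact.exists_thickening_subset_open hopen ht
    set η₀ := t.inf' htne (fun x => η x.1 x.2) with hη₀def
    have hη₀le : ∀ i ∈ t, η₀ ≤ η i.1 i.2 := fun i hi => Finset.inf'_le _ hi
    have hη₀pos : 0 < η₀ := (Finset.lt_inf'_iff _).mpr fun i _ => hη i.1 i.2
    set Φ := fun r : ℝ => ∑ x ∈ t, φ x.1 x.2 r with hΦdef
    have hdiff : ∀ (r : ℝ), r ∈ Ioo 0 η₀ → ∀ i ∈ t, DifferentiableAt ℝ (φ i.1 i.2) r := by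
      intro r hr i hi
      have hmem : r ∈ Ioo 0 (η i.1 i.2) := ⟨hr.1, lt_of_lt_of_le hr.2 (hη₀le i hi)⟩
      exact ((hφ i.1 i.2).2.2.2.2.1.differentiableOn one_ne_zero).differentiableAt
        (isOpen_Ioo.mem_nhds hmem)
    have hΦderiv : ∀ r ∈ Ioo 0 η₀, deriv Φ r = ∑ i ∈ t, deriv (φ i.1 i.2) r := by
      intro r hr
      exact deriv_fun_sum (fun i hi => hdiff r hr i hi)
    have hΦdes : Φ ∈ desingularizing_function η₀ := by
      refine ⟨concaveOn_finset_sum' t (convex_Ico 0 η₀) fun i hi =>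
          ((hφ i.1 i.2).1.subset (Ico_subset_Ico_right (hη₀le i hi)) (convex_Ico 0 η₀)),
        continuousOn_finset_sum t fun i hi =>
          (hφ i.1 i.2).2.1.mono (Ico_subset_Ico_right (hη₀le i hi)),
        fun x hx => Finset.sum_nonneg fun i hi =>
          (hφ i.1 i.2).2.2.1 x (Ico_subset_Ico_right (hη₀le i hi) hx),
        Finset.sum_eq_zero fun i _ => (hφ i.1 i.2).2.2.2.1,
        ContDiffOn.sum fun i hi =>
          (hφ i.1 i.2).2.2.2.2.1.mono (Ioo_subset_Ioo_right (hη₀le i hi)),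
        ?_⟩
      intro r hr
      rw [hΦderiv r hr]
      exact Finset.sum_pos (fun i hi => (hφ i.1 i.2).2.2.2.2.2 r
        ⟨hr.1, lt_of_lt_of_le hr.2 (hη₀le i hi)⟩) htne
    refine ⟨ε, hε, η₀, hη₀pos, Φ, hΦdes, ?_⟩
    intro u hu x hx
    have hxd := hx.1
    have hfl := hx.2.1
    have hfu := hx.2.2
    have hxth : x ∈ Metric.thickening ε Ω :=
      (Metric.mem_thickening_iff_infDist_lt hΩne).mpr hxd
    obtain ⟨i, hi, hxi⟩ := mem_iUnion₂.mp (hεsub hxth)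
    have hxs : x ∈ s i.1 i.2 := interior_subset hxi
    have hfiu : f i.1 = f u := by rw [hc i.1 i.2, hc u hu]
    have hrmem : f x - f u ∈ Ioo 0 η₀ := ⟨sub_pos.mpr hfl, by linarith⟩
    have key := hKL i.1 i.2 x ⟨hxs, by rw [hfiu]; exact hfl,
      by rw [hfiu]; exact lt_of_lt_of_le hfu (by linarith [hη₀le i hi])⟩
    rw [hfiu] at key
    refine le_trans key ?_
    refine mul_le_mul_left (ENNReal.ofReal_le_ofReal ?_) _
    rw [hΦderiv _ hrmem]
    refine Finset.single_le_sum (f := fun j : Ω => deriv (φ j.1 j.2) (f x - f u)) (fun j hj => le_of_lt ?_) hi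
    exact (hφ j.1 j.2).2.2.2.2.2 _ ⟨hrmem.1, lt_of_lt_of_le hrmem.2 (hη₀le j hj)⟩
end

section
/- In the BCD setting with step sizes c_k = d_k = 1/(γl) for some γ > 1: there exists ρ₁ > 0, namely ρ₁ = (γ - 1)l, such that for all k ≥ 0, (ρ₁/2)‖z^{k+1} - z^k‖² ≤ Ψ(z^k) - Ψ(z^{k+1}), where Ψ(x, y) = f(x) + g(y) + H(x, y). -/
open Filter Topology Set
open scoped RealInnerProductSpace

variable {E : Type*} [NormedAddCommGroup E] [InnerProductSpace ℝ E]
variable {F : Type*} [NormedAddCommGroup F] [InnerProductSpace ℝ F]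

/-- `prox_prop f y x` means that `x ∈ prox_f(y)`, i.e. `x` minimizes
`u ↦ f u + ½‖u - y‖²` over the whole space. -/
def prox_prop (f : E → ℝ) (y : E) (x : E) : Prop :=
  IsMinOn (fun u => f u + ‖u - y‖ ^ 2 / 2) Set.univ x

variable [CompleteSpace E] [CompleteSpace F]

/-- Gradient of `x ↦ H (x, y)` at `x`. -/
noncomputable def grad_fst (H : WithLp 2 (E × F) → ℝ) (y : F) (x : E) : E :=
  gradient (fun t => H ((WithLp.equiv 2 (E × F)).symm (t, y))) x

/-- Gradient of `y ↦ H (x, y)` at `y`. -/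
noncomputable def grad_snd (H : WithLp 2 (E × F) → ℝ) (x : E) (y : F) : F :=
  gradient (fun t => H ((WithLp.equiv 2 (E × F)).symm (x, t))) y

/-- The proximal alternating linearized minimization (BCD) setting:
problem data (`f`, `g` lower semicontinuous and bounded below, `H` continuously
differentiable with `l`-Lipschitz gradient, `l > 0`) together with the iterates. -/
structure BCD (f : E → ℝ) (g : F → ℝ) (H : WithLp 2 (E × F) → ℝ) (l : NNReal)
    (x0 : E) (y0 : F) where
  lbdf : BddBelow (f '' Set.univ)
  lbdg : BddBelow (g '' Set.univ)
  hf : LowerSemicontinuous f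
  hg : LowerSemicontinuous g
  conf : ContDiff ℝ 1 H
  lpos : (0 : ℝ) < l
  lip : LipschitzWith l (gradient H)
  x : ℕ → E
  y : ℕ → F
  hx0 : x 0 = x0
  hy0 : y 0 = y0
  c : ℕ → ℝ
  d : ℕ → ℝ
  s₁ : ∀ k, prox_prop (c k • f) (x k - c k • grad_fst H (y k) (x k)) (x (k + 1))
  s₂ : ∀ k, prox_prop (d k • g) (y k - d k • grad_snd H (x (k + 1)) (y k)) (y (k + 1))

namespace BCD

variable {f : E → ℝ} {g : F → ℝ} {H : WithLp 2 (E × F) → ℝ} {l : NNReal} {x0 : E} {y0 : F}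

/-- The combined iterate `z^k = (x^k, y^k)`. -/
noncomputable def z (self : BCD f g H l x0 y0) : ℕ → WithLp 2 (E × F) :=
  fun n => (WithLp.equiv 2 (E × F)).symm (self.x n, self.y n)

/-- The objective `Ψ(x, y) = f x + g y + H (x, y)`. -/
noncomputable def ψ (_ : BCD f g H l x0 y0) : WithLp 2 (E × F) → ℝ :=
  fun z => f ((WithLp.equiv 2 (E × F)) z).1 + g ((WithLp.equiv 2 (E × F)) z).2 + H z

end BCD


section AuxLemmas

lemma my_descent {E : Type*} [NormedAddCommGroup E] [InnerProductSpace ℝ E] [CompleteSpace E]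
    (φ : E → ℝ) (G : E → E) (l : ℝ)
    (hG : ∀ t, HasGradientAt φ (G t) t)
    (hlip : ∀ a b, ‖G a - G b‖ ≤ l * ‖a - b‖) (x y : E) :
    φ y ≤ φ x + ⟪G x, y - x⟫ + l / 2 * ‖y - x‖ ^ 2 := by
  set v := y - x with hv
  set a := ⟪G x, v⟫ with ha
  set b := l / 2 * ‖v‖ ^ 2 with hb
  set q : ℝ → ℝ := fun t => φ (x + t • v) - t * a - t ^ 2 * b with hq
  have hφcont : Continuous φ :=
    continuous_iff_continuousAt.mpr fun t => (hG t).differentiableAt.continuousAt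
  have hqd : ∀ t : ℝ, HasDerivAt q (⟪G (x + t • v), v⟫ - a - 2 * t * b) t := by
    intro t
    have h1 : HasDerivAt (fun s : ℝ => x + s • v) v t := by
      simpa using ((hasDerivAt_id t).smul_const v).const_add x
    have h2 := (hG (x + t • v)).hasFDerivAt.comp_hasDerivAt t h1
    have h3 : HasDerivAt (fun s : ℝ => s * a) a t := by
      simpa using (hasDerivAt_id t).mul_const a
    have h4 : HasDerivAt (fun s : ℝ => s ^ 2 * b) (2 * t * b) t := by
      simpa using (hasDerivAt_pow 2 t).mul_const b
    refine HasDerivAt.congr_deriv ((h2.sub h3).sub h4) ?_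
    simp [InnerProductSpace.toDual_apply_apply]
  have hanti : AntitoneOn q (Set.Icc 0 1) := by
    apply antitoneOn_of_deriv_nonpos (convex_Icc 0 1)
    · exact Continuous.continuousOn (by continuity)
    · exact fun t _ => (hqd t).differentiableAt.differentiableWithinAt
    · intro t ht
      rw [interior_Icc, Set.mem_Ioo] at ht
      rw [(hqd t).deriv]
      have h5 : ⟪G (x + t • v), v⟫ - a = ⟪G (x + t • v) - G x, v⟫ := by
        rw [inner_sub_left]
      have h6 : ⟪G (x + t • v) - G x, v⟫ ≤ ‖G (x + t • v) - G x‖ * ‖v‖ :=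
        real_inner_le_norm _ _
      have h7 : ‖G (x + t • v) - G x‖ ≤ l * (t * ‖v‖) := by
        have := hlip (x + t • v) x
        simpa [norm_smul, abs_of_pos ht.1] using this
      have h8 : ‖G (x + t • v) - G x‖ * ‖v‖ ≤ l * (t * ‖v‖) * ‖v‖ :=
        mul_le_mul_of_nonneg_right h7 (norm_nonneg _)
      have hb' : 2 * t * b = l * (t * ‖v‖) * ‖v‖ := by rw [hb]; ring
      linarith [h5 ▸ h6]
  have hq10 : q 1 ≤ q 0 := hanti (by norm_num) (by norm_num) zero_le_one
  have h0 : q 0 = φ x := by simp [hq]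
  have h1 : q 1 = φ y - a - b := by simp [hq, hv]
  rw [h0, h1] at hq10
  linarith

variable {E : Type*} [NormedAddCommGroup E] [InnerProductSpace ℝ E] [CompleteSpace E]
variable {F : Type*} [NormedAddCommGroup F] [InnerProductSpace ℝ F] [CompleteSpace F]

lemma my_grad_fst_spec (H : WithLp 2 (E × F) → ℝ) (hH : ContDiff ℝ 1 H) (y : F) (x : E) :
    HasGradientAt (fun t => H ((WithLp.equiv 2 (E × F)).symm (t, y)))
      ((gradient H ((WithLp.equiv 2 (E × F)).symm (x, y))).fst) x := by
  have hfd : HasFDerivAt H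
      (InnerProductSpace.toDual ℝ _ (gradient H ((WithLp.equiv 2 (E × F)).symm (x, y))))
      ((WithLp.equiv 2 (E × F)).symm (x, y)) :=
    ((hH.differentiable one_ne_zero) _).hasGradientAt.hasFDerivAt
  set Lx : E →L[ℝ] WithLp 2 (E × F) :=
    ((WithLp.prodContinuousLinearEquiv 2 ℝ E F).symm :
      (E × F) →L[ℝ] WithLp 2 (E × F)).comp (ContinuousLinearMap.inl ℝ E F) with hLxdef
  have hLx : ∀ t : E, Lx t = (WithLp.equiv 2 (E × F)).symm (t, 0) := fun t => rfl
  have hline : ∀ t : E, (WithLp.equiv 2 (E × F)).symm (t, y)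
      = Lx t + (WithLp.equiv 2 (E × F)).symm (0, y) := by
    intro t
    rw [hLx]
    show WithLp.toLp 2 (t, y) = WithLp.toLp 2 (t, 0) + WithLp.toLp 2 (0, y)
    rw [← WithLp.toLp_add]
    norm_num
  have h1 : HasFDerivAt (fun t : E => Lx t + (WithLp.equiv 2 (E × F)).symm (0, y)) Lx x :=
    Lx.hasFDerivAt.add_const _
  rw [hline x] at hfd
  have hcomp := hfd.comp x h1
  have heq : (InnerProductSpace.toDual ℝ (WithLp 2 (E × F))
        (gradient H ((WithLp.equiv 2 (E × F)).symm (x, y)))).comp Lx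
      = InnerProductSpace.toDual ℝ E
          ((gradient H ((WithLp.equiv 2 (E × F)).symm (x, y))).fst) := by
    ext h
    rw [ContinuousLinearMap.comp_apply, InnerProductSpace.toDual_apply_apply,
      InnerProductSpace.toDual_apply_apply, hLx, WithLp.prod_inner_apply]
    simp
  rw [hasGradientAt_iff_hasFDerivAt, ← heq]
  have : (fun t => H ((WithLp.equiv 2 (E × F)).symm (t, y)))
      = H ∘ (fun t : E => Lx t + (WithLp.equiv 2 (E × F)).symm (0, y)) := by
    funext t; exact congrArg H (hline t)
  rw [this]
  rwa [← hline] at hcomp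

lemma my_grad_snd_spec (H : WithLp 2 (E × F) → ℝ) (hH : ContDiff ℝ 1 H) (x : E) (y : F) :
    HasGradientAt (fun t => H ((WithLp.equiv 2 (E × F)).symm (x, t)))
      ((gradient H ((WithLp.equiv 2 (E × F)).symm (x, y))).snd) y := by
  have hfd : HasFDerivAt H
      (InnerProductSpace.toDual ℝ _ (gradient H ((WithLp.equiv 2 (E × F)).symm (x, y))))
      ((WithLp.equiv 2 (E × F)).symm (x, y)) :=
    ((hH.differentiable one_ne_zero) _).hasGradientAt.hasFDerivAt
  set Ly : F →L[ℝ] WithLp 2 (E × F) :=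
    ((WithLp.prodContinuousLinearEquiv 2 ℝ E F).symm :
      (E × F) →L[ℝ] WithLp 2 (E × F)).comp (ContinuousLinearMap.inr ℝ E F) with hLydef
  have hLy : ∀ t : F, Ly t = (WithLp.equiv 2 (E × F)).symm (0, t) := fun t => rfl
  have hline : ∀ t : F, (WithLp.equiv 2 (E × F)).symm (x, t)
      = Ly t + (WithLp.equiv 2 (E × F)).symm (x, 0) := by
    intro t
    rw [hLy]
    show WithLp.toLp 2 (x, t) = WithLp.toLp 2 (0, t) + WithLp.toLp 2 (x, 0)
    rw [← WithLp.toLp_add]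
    norm_num
  have h1 : HasFDerivAt (fun t : F => Ly t + (WithLp.equiv 2 (E × F)).symm (x, 0)) Ly y :=
    Ly.hasFDerivAt.add_const _
  rw [hline y] at hfd
  have hcomp := hfd.comp y h1
  have heq : (InnerProductSpace.toDual ℝ (WithLp 2 (E × F))
        (gradient H ((WithLp.equiv 2 (E × F)).symm (x, y)))).comp Ly
      = InnerProductSpace.toDual ℝ F
          ((gradient H ((WithLp.equiv 2 (E × F)).symm (x, y))).snd) := by
    ext h
    rw [ContinuousLinearMap.comp_apply, InnerProductSpace.toDual_apply_apply,
      InnerProductSpace.toDual_apply_apply, hLy, WithLp.prod_inner_apply]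
    simp
  rw [hasGradientAt_iff_hasFDerivAt, ← heq]
  have : (fun t => H ((WithLp.equiv 2 (E × F)).symm (x, t)))
      = H ∘ (fun t : F => Ly t + (WithLp.equiv 2 (E × F)).symm (x, 0)) := by
    funext t; exact congrArg H (hline t)
  rw [this]
  rwa [← hline] at hcomp

lemma my_prox_step {E : Type*} [NormedAddCommGroup E] [InnerProductSpace ℝ E] [CompleteSpace E]
    (f : E → ℝ) (φ : E → ℝ) (G : E → E) (l γ : ℝ) (hl : 0 < l) (hγ : 1 < γ)
    (hG : ∀ t, HasGradientAt φ (G t) t)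
    (hlip : ∀ a b, ‖G a - G b‖ ≤ l * ‖a - b‖)
    (x x' : E) (hprox : prox_prop ((1 / (γ * l)) • f) (x - (1 / (γ * l)) • G x) x') :
    f x' + φ x' + (γ - 1) * l / 2 * ‖x' - x‖ ^ 2 ≤ f x + φ x := by
  set c : ℝ := 1 / (γ * l) with hcdef
  have hγl : 0 < γ * l := mul_pos (zero_lt_one.trans hγ) hl
  have hc : 0 < c := by positivity
  have hc1 : c * (γ * l) = 1 := by rw [hcdef]; field_simp
  rw [prox_prop, isMinOn_iff] at hprox
  have key := hprox x (Set.mem_univ x)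
  have key2 : c * f x' + ‖x' - (x - c • G x)‖ ^ 2 / 2
      ≤ c * f x + ‖x - (x - c • G x)‖ ^ 2 / 2 := key
  have e1 : x' - (x - c • G x) = (x' - x) + c • G x := by abel
  have e2 : x - (x - c • G x) = c • G x := by abel
  rw [e1, e2, norm_add_sq_real] at key2
  rw [real_inner_smul_right] at key2
  have hdesc := my_descent φ G l hG hlip x x'
  have hip : ⟪x' - x, G x⟫ = ⟪G x, x' - x⟫ := real_inner_comm _ _
  rw [hip] at key2
  set ip := ⟪G x, x' - x⟫ with hipdef
  set n := ‖x' - x‖ ^ 2 with hndef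
  have hn : 0 ≤ n := by positivity
  have key' : c * f x' + n / 2 + c * ip ≤ c * f x := by linarith [key2]
  have chdesc := mul_le_mul_of_nonneg_left hdesc hc.le
  have h6 : c * γ * l * n = n := by
    rw [show c * γ * l * n = c * (γ * l) * n by ring, hc1, one_mul]
  rw [← mul_le_mul_iff_right₀ hc]
  nlinarith [chdesc, key', h6, hn]

end AuxLemmas

theorem Sufficient_Descent1 {E : Type*} [NormedAddCommGroup E] [InnerProductSpace ℝ E]
    [CompleteSpace E] {F : Type*} [NormedAddCommGroup F] [InnerProductSpace ℝ F]
    [CompleteSpace F] {f : E → ℝ} {g : F → ℝ} {H : WithLp 2 (E × F) → ℝ} {l : NNReal}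
    {x0 : E} {y0 : F} (alg : BCD f g H l x0 y0) (γ : ℝ) (hγ : γ > 1)
    (ck : ∀ k, alg.c k = 1 / (γ * l)) (dk : ∀ k, alg.d k = 1 / (γ * l)) :
    ∃ ρ₁ > (0 : ℝ), ρ₁ = (γ - 1) * l ∧
      ∀ k, ρ₁ / 2 * ‖alg.z (k + 1) - alg.z k‖ ^ 2 ≤ alg.ψ (alg.z k) - alg.ψ (alg.z (k + 1)) := by
  have hl : (0 : ℝ) < l := alg.lpos
  have hρ : (0 : ℝ) < (γ - 1) * l := mul_pos (by linarith) hl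
  refine ⟨(γ - 1) * l, hρ, rfl, ?_⟩
  intro k
  -- Lipschitz bound for the full gradient
  have hlipH : ∀ u w : WithLp 2 (E × F), ‖gradient H u - gradient H w‖ ≤ l * ‖u - w‖ := by
    intro u w
    have := alg.lip.dist_le_mul u w
    simpa [dist_eq_norm] using this
  have hfstle : ∀ v : WithLp 2 (E × F), ‖v.fst‖ ≤ ‖v‖ := by
    intro v
    have h := WithLp.prod_norm_sq_eq_of_L2 v
    nlinarith [norm_nonneg v, norm_nonneg v.fst, norm_nonneg v.snd, sq_nonneg ‖v.snd‖]
  have hsndle : ∀ v : WithLp 2 (E × F), ‖v.snd‖ ≤ ‖v‖ := by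
    intro v
    have h := WithLp.prod_norm_sq_eq_of_L2 v
    nlinarith [norm_nonneg v, norm_nonneg v.fst, norm_nonneg v.snd, sq_nonneg ‖v.fst‖]
  -- x-step
  have hGx : ∀ t, HasGradientAt (fun s => H ((WithLp.equiv 2 (E × F)).symm (s, alg.y k)))
      (grad_fst H (alg.y k) t) t := by
    intro t
    have h := my_grad_fst_spec H alg.conf (alg.y k) t
    have e : grad_fst H (alg.y k) t
        = (gradient H ((WithLp.equiv 2 (E × F)).symm (t, alg.y k))).fst := h.gradient
    rw [e]; exact h
  have hlipx : ∀ a b : E, ‖grad_fst H (alg.y k) a - grad_fst H (alg.y k) b‖ ≤ l * ‖a - b‖ := by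
    intro a b
    have ea : grad_fst H (alg.y k) a
        = (gradient H ((WithLp.equiv 2 (E × F)).symm (a, alg.y k))).fst :=
      (my_grad_fst_spec H alg.conf (alg.y k) a).gradient
    have eb : grad_fst H (alg.y k) b
        = (gradient H ((WithLp.equiv 2 (E × F)).symm (b, alg.y k))).fst :=
      (my_grad_fst_spec H alg.conf (alg.y k) b).gradient
    rw [ea, eb, ← WithLp.sub_fst]
    have h1 := hfstle (gradient H ((WithLp.equiv 2 (E × F)).symm (a, alg.y k))
      - gradient H ((WithLp.equiv 2 (E × F)).symm (b, alg.y k)))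
    have h2 := hlipH ((WithLp.equiv 2 (E × F)).symm (a, alg.y k))
      ((WithLp.equiv 2 (E × F)).symm (b, alg.y k))
    have h3 : ‖(WithLp.equiv 2 (E × F)).symm (a, alg.y k)
        - (WithLp.equiv 2 (E × F)).symm (b, alg.y k)‖ = ‖a - b‖ := by
      show ‖WithLp.toLp 2 (a, alg.y k) - WithLp.toLp 2 (b, alg.y k)‖ = ‖a - b‖
      rw [← WithLp.toLp_sub, Prod.mk_sub_mk, sub_self]
      exact WithLp.norm_toLp_fst 2 E F (a - b)
    rw [h3] at h2
    exact le_trans h1 h2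
  have hproxx : prox_prop ((1 / (γ * (l : ℝ))) • f)
      (alg.x k - (1 / (γ * (l : ℝ))) • grad_fst H (alg.y k) (alg.x k)) (alg.x (k + 1)) := by
    have h := alg.s₁ k
    rwa [ck k] at h
  have hx := my_prox_step f (fun s => H ((WithLp.equiv 2 (E × F)).symm (s, alg.y k)))
    (fun t => grad_fst H (alg.y k) t) l γ hl hγ hGx hlipx (alg.x k) (alg.x (k + 1)) hproxx
  -- y-step
  have hGy : ∀ t, HasGradientAt (fun s => H ((WithLp.equiv 2 (E × F)).symm (alg.x (k + 1), s)))
      (grad_snd H (alg.x (k + 1)) t) t := by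
    intro t
    have h := my_grad_snd_spec H alg.conf (alg.x (k + 1)) t
    have e : grad_snd H (alg.x (k + 1)) t
        = (gradient H ((WithLp.equiv 2 (E × F)).symm (alg.x (k + 1), t))).snd := h.gradient
    rw [e]; exact h
  have hlipy : ∀ a b : F,
      ‖grad_snd H (alg.x (k + 1)) a - grad_snd H (alg.x (k + 1)) b‖ ≤ l * ‖a - b‖ := by
    intro a b
    have ea : grad_snd H (alg.x (k + 1)) a
        = (gradient H ((WithLp.equiv 2 (E × F)).symm (alg.x (k + 1), a))).snd :=
      (my_grad_snd_spec H alg.conf (alg.x (k + 1)) a).gradient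
    have eb : grad_snd H (alg.x (k + 1)) b
        = (gradient H ((WithLp.equiv 2 (E × F)).symm (alg.x (k + 1), b))).snd :=
      (my_grad_snd_spec H alg.conf (alg.x (k + 1)) b).gradient
    rw [ea, eb, ← WithLp.sub_snd]
    have h1 := hsndle (gradient H ((WithLp.equiv 2 (E × F)).symm (alg.x (k + 1), a))
      - gradient H ((WithLp.equiv 2 (E × F)).symm (alg.x (k + 1), b)))
    have h2 := hlipH ((WithLp.equiv 2 (E × F)).symm (alg.x (k + 1), a))
      ((WithLp.equiv 2 (E × F)).symm (alg.x (k + 1), b))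
    have h3 : ‖(WithLp.equiv 2 (E × F)).symm (alg.x (k + 1), a)
        - (WithLp.equiv 2 (E × F)).symm (alg.x (k + 1), b)‖ = ‖a - b‖ := by
      show ‖WithLp.toLp 2 (alg.x (k + 1), a) - WithLp.toLp 2 (alg.x (k + 1), b)‖ = ‖a - b‖
      rw [← WithLp.toLp_sub, Prod.mk_sub_mk, sub_self]
      exact WithLp.norm_toLp_snd 2 E F (a - b)
    rw [h3] at h2
    exact le_trans h1 h2
  have hproxy : prox_prop ((1 / (γ * (l : ℝ))) • g)
      (alg.y k - (1 / (γ * (l : ℝ))) • grad_snd H (alg.x (k + 1)) (alg.y k)) (alg.y (k + 1)) := by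
    have h := alg.s₂ k
    rwa [dk k] at h
  have hy := my_prox_step g (fun s => H ((WithLp.equiv 2 (E × F)).symm (alg.x (k + 1), s)))
    (fun t => grad_snd H (alg.x (k + 1)) t) l γ hl hγ hGy hlipy (alg.y k) (alg.y (k + 1)) hproxy
  simp only [BCD.ψ, BCD.z, Equiv.apply_symm_apply]
  have hznorm : ‖(WithLp.equiv 2 (E × F)).symm (alg.x (k + 1), alg.y (k + 1))
        - (WithLp.equiv 2 (E × F)).symm (alg.x k, alg.y k)‖ ^ 2
      = ‖alg.x (k + 1) - alg.x k‖ ^ 2 + ‖alg.y (k + 1) - alg.y k‖ ^ 2 := by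
    show ‖WithLp.toLp 2 (alg.x (k + 1), alg.y (k + 1)) - WithLp.toLp 2 (alg.x k, alg.y k)‖ ^ 2 = _
    rw [← WithLp.toLp_sub, Prod.mk_sub_mk, WithLp.prod_norm_sq_eq_of_L2]
    rfl
  rw [hznorm]
  linarith [hx, hy]
end

section
/- In the BCD setting with step sizes c_k = d_k = 1/(γl) for some γ > 1, and assuming additionally that Ψ is bounded below: the sequence ‖z^{k+1} - z^k‖ tends to 0 as k → ∞ (indeed ∑_k ‖z^{k+1} - z^k‖² < ∞). -/
open Filter Topology Set
open scoped RealInnerProductSpace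

variable {E : Type*} [NormedAddCommGroup E] [InnerProductSpace ℝ E]
variable {F : Type*} [NormedAddCommGroup F] [InnerProductSpace ℝ F]

variable [CompleteSpace E] [CompleteSpace F]

section AuxDescent

variable {G : Type*} [NormedAddCommGroup G] [InnerProductSpace ℝ G] [CompleteSpace G]

theorem my_descent_lemma {H : G → ℝ} {l : NNReal} (hH : ContDiff ℝ 1 H)
    (lip : LipschitzWith l (gradient H)) (x y : G) :
    H y ≤ H x + ⟪gradient H x, y - x⟫ + (l : ℝ) / 2 * ‖y - x‖ ^ 2 := by
  set v := y - x with hv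
  have hdiff : ∀ u, HasGradientAt H (gradient H u) u := fun u =>
    ((hH.differentiable one_ne_zero) u).hasGradientAt
  have hline : ∀ t : ℝ, HasDerivAt (fun t : ℝ => x + t • v) v t := by
    intro t
    simpa using ((hasDerivAt_id t).smul_const v).const_add x
  have hφ : ∀ t : ℝ, HasDerivAt (fun t => H (x + t • v)) ⟪gradient H (x + t • v), v⟫ t := by
    intro t
    have h1 := hasGradientAt_iff_hasFDerivAt.mp (hdiff (x + t • v))
    simpa [Function.comp_def] using h1.comp_hasDerivAt t (hline t)
  have hcont : Continuous fun t : ℝ => ⟪gradient H (x + t • v), v⟫ := by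
    exact Continuous.inner (lip.continuous.comp (by continuity)) continuous_const
  have hint : IntervalIntegrable (fun t : ℝ => ⟪gradient H (x + t • v), v⟫)
      MeasureTheory.volume 0 1 := hcont.intervalIntegrable 0 1
  have heq : H (x + (1:ℝ) • v) - H (x + (0:ℝ) • v)
      = ∫ t in (0:ℝ)..1, ⟪gradient H (x + t • v), v⟫ := by
    rw [intervalIntegral.integral_eq_sub_of_hasDerivAt (fun t _ => hφ t) hint]
  have hint2 : IntervalIntegrable (fun t : ℝ => ⟪gradient H x, v⟫ + ((l : ℝ) * ‖v‖ ^ 2) * t)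
      MeasureTheory.volume 0 1 :=
    (continuous_const.add (continuous_const.mul continuous_id)).intervalIntegrable 0 1
  have hbound : (∫ t in (0:ℝ)..1, ⟪gradient H (x + t • v), v⟫)
      ≤ ∫ t in (0:ℝ)..1, (⟪gradient H x, v⟫ + ((l : ℝ) * ‖v‖ ^ 2) * t) := by
    apply intervalIntegral.integral_mono_on (by norm_num) hint hint2
    intro t ht
    rcases ht with ⟨ht0, _⟩
    have h2 : ⟪gradient H (x + t • v) - gradient H x, v⟫ ≤ (l : ℝ) * (t * ‖v‖) * ‖v‖ := by
      calc ⟪gradient H (x + t • v) - gradient H x, v⟫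
          ≤ ‖gradient H (x + t • v) - gradient H x‖ * ‖v‖ := real_inner_le_norm _ _
        _ ≤ ((l : ℝ) * ‖(x + t • v) - x‖) * ‖v‖ := by
            gcongr
            have := lip.dist_le_mul (x + t • v) x
            rwa [dist_eq_norm, dist_eq_norm] at this
        _ = (l : ℝ) * (t * ‖v‖) * ‖v‖ := by
            rw [add_sub_cancel_left, norm_smul, Real.norm_eq_abs, abs_of_nonneg ht0]
    have h3 : ⟪gradient H (x + t • v), v⟫
        = ⟪gradient H x, v⟫ + ⟪gradient H (x + t • v) - gradient H x, v⟫ := by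
      rw [inner_sub_left]; ring
    rw [h3]; nlinarith
  have hval : (∫ t in (0:ℝ)..1, (⟪gradient H x, v⟫ + ((l : ℝ) * ‖v‖ ^ 2) * t))
      = ⟪gradient H x, v⟫ + ((l : ℝ) * ‖v‖ ^ 2) * (1 / 2) := by
    have hg : IntervalIntegrable (fun t : ℝ => ((l : ℝ) * ‖v‖ ^ 2) * t)
        MeasureTheory.volume 0 1 := by
      apply Continuous.intervalIntegrable; continuity
    rw [intervalIntegral.integral_add intervalIntegrable_const hg,
      intervalIntegral.integral_const_mul, integral_id]
    norm_num
  have h0 : x + (0:ℝ) • v = x := by simp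
  have h1 : x + (1:ℝ) • v = y := by simp [hv]
  rw [h0, h1] at heq
  rw [hval] at hbound
  have : H y - H x ≤ ⟪gradient H x, v⟫ + ((l : ℝ) * ‖v‖ ^ 2) * (1 / 2) := heq ▸ hbound
  linarith

end AuxDescent

section AuxGrad

variable {E : Type*} [NormedAddCommGroup E] [InnerProductSpace ℝ E]
variable {F : Type*} [NormedAddCommGroup F] [InnerProductSpace ℝ F]
variable [CompleteSpace E] [CompleteSpace F]

theorem my_grad_fst_eq {H : WithLp 2 (E × F) → ℝ} (hH : ContDiff ℝ 1 H) (x : E) (y : F) :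
    grad_fst H y x = (gradient H ((WithLp.equiv 2 (E × F)).symm (x, y))).ofLp.1 := by
  set z := (WithLp.equiv 2 (E × F)).symm (x, y) with hz
  set G := gradient H z with hG
  have hGz : HasFDerivAt H (InnerProductSpace.toDual ℝ _ G) z :=
    hasGradientAt_iff_hasFDerivAt.mp ((hH.differentiable one_ne_zero z).hasGradientAt)
  set L : E →L[ℝ] WithLp 2 (E × F) :=
    (WithLp.prodContinuousLinearEquiv 2 ℝ E F).symm.toContinuousLinearMap.comp
      (ContinuousLinearMap.inl ℝ E F) with hL
  have hmap : HasFDerivAt (fun t : E => (WithLp.equiv 2 (E × F)).symm (t, y)) L x := by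
    have hfun : (fun t : E => (WithLp.equiv 2 (E × F)).symm (t, y))
        = fun t : E => L t + (WithLp.equiv 2 (E × F)).symm (0, y) := by
      funext t
      apply (WithLp.equiv 2 (E × F)).injective
      simp [hL, WithLp.equiv_symm_apply]
    rw [hfun]
    exact (L.hasFDerivAt).add_const _
  have hcomp := hGz.comp x hmap
  have hkey : (InnerProductSpace.toDual ℝ (WithLp 2 (E × F)) G).comp L
      = InnerProductSpace.toDual ℝ E G.ofLp.1 := by
    apply ContinuousLinearMap.ext
    intro a
    simp only [ContinuousLinearMap.comp_apply, InnerProductSpace.toDual_apply_apply]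
    have h1 : L a = (WithLp.equiv 2 (E × F)).symm (a, 0) := by
      apply (WithLp.equiv 2 (E × F)).injective
      simp [hL]
    rw [h1, WithLp.prod_inner_apply]
    simp
  rw [hkey] at hcomp
  have h2 := hasFDerivAt_iff_hasGradientAt.mp hcomp
  rw [LinearIsometryEquiv.symm_apply_apply] at h2
  exact HasGradientAt.gradient h2

theorem my_grad_snd_eq {H : WithLp 2 (E × F) → ℝ} (hH : ContDiff ℝ 1 H) (x : E) (y : F) :
    grad_snd H x y = (gradient H ((WithLp.equiv 2 (E × F)).symm (x, y))).ofLp.2 := by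
  set z := (WithLp.equiv 2 (E × F)).symm (x, y) with hz
  set G := gradient H z with hG
  have hGz : HasFDerivAt H (InnerProductSpace.toDual ℝ _ G) z :=
    hasGradientAt_iff_hasFDerivAt.mp ((hH.differentiable one_ne_zero z).hasGradientAt)
  set L : F →L[ℝ] WithLp 2 (E × F) :=
    (WithLp.prodContinuousLinearEquiv 2 ℝ E F).symm.toContinuousLinearMap.comp
      (ContinuousLinearMap.inr ℝ E F) with hL
  have hmap : HasFDerivAt (fun t : F => (WithLp.equiv 2 (E × F)).symm (x, t)) L y := by
    have hfun : (fun t : F => (WithLp.equiv 2 (E × F)).symm (x, t))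
        = fun t : F => L t + (WithLp.equiv 2 (E × F)).symm (x, 0) := by
      funext t
      apply (WithLp.equiv 2 (E × F)).injective
      simp [hL, WithLp.equiv_symm_apply]
    rw [hfun]
    exact (L.hasFDerivAt).add_const _
  have hcomp := hGz.comp y hmap
  have hkey : (InnerProductSpace.toDual ℝ (WithLp 2 (E × F)) G).comp L
      = InnerProductSpace.toDual ℝ F G.ofLp.2 := by
    apply ContinuousLinearMap.ext
    intro a
    simp only [ContinuousLinearMap.comp_apply, InnerProductSpace.toDual_apply_apply]
    have h1 : L a = (WithLp.equiv 2 (E × F)).symm (0, a) := by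
      apply (WithLp.equiv 2 (E × F)).injective
      simp [hL]
    rw [h1, WithLp.prod_inner_apply]
    simp
  rw [hkey] at hcomp
  have h2 := hasFDerivAt_iff_hasGradientAt.mp hcomp
  rw [LinearIsometryEquiv.symm_apply_apply] at h2
  exact HasGradientAt.gradient h2

end AuxGrad

theorem my_real_combine {c ρ lR fX fX' Hk Hm ip s T : ℝ} (hc : 0 < c)
    (hkey : c * ρ = 1 / 2 - c * lR / 2)
    (hpx : c * fX' + (s + 2 * (c * ip) + T) / 2 ≤ c * fX + T / 2)
    (hdx : Hm ≤ Hk + ip + lR / 2 * s) :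
    fX' + Hm + ρ * s ≤ fX + Hk := by
  have h2 := mul_le_mul_of_nonneg_left hdx hc.le
  have hks : c * ρ * s = (1 / 2 - c * lR / 2) * s := by rw [hkey]
  have h1 : c * (fX' + Hm + ρ * s) ≤ c * (fX + Hk) := by nlinarith [hpx, h2, hks]
  exact le_of_mul_le_mul_left h1 hc

theorem my_step {E : Type*} [NormedAddCommGroup E] [InnerProductSpace ℝ E]
    [CompleteSpace E] {F : Type*} [NormedAddCommGroup F] [InnerProductSpace ℝ F]
    [CompleteSpace F] {f : E → ℝ} {g : F → ℝ} {H : WithLp 2 (E × F) → ℝ} {l : NNReal}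
    {x0 : E} {y0 : F} (alg : BCD f g H l x0 y0) (γ : ℝ) (hγ : γ > 1)
    (ck : ∀ k, alg.c k = 1 / (γ * l)) (dk : ∀ k, alg.d k = 1 / (γ * l)) (k : ℕ) :
    alg.ψ (alg.z (k + 1)) + ((γ - 1) * (l : ℝ) / 2) * ‖alg.z (k + 1) - alg.z k‖ ^ 2
      ≤ alg.ψ (alg.z k) := by
  have hl : (0 : ℝ) < l := alg.lpos
  have hγ0 : (0 : ℝ) < γ := lt_trans one_pos hγ
  have hc : (0 : ℝ) < 1 / (γ * l) := by positivity
  have hkey : (1 / (γ * (l:ℝ))) * ((γ - 1) * (l : ℝ) / 2)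
      = 1 / 2 - (1 / (γ * (l:ℝ))) * (l : ℝ) / 2 := by
    field_simp
  have hzk : alg.z k = (WithLp.equiv 2 (E × F)).symm (alg.x k, alg.y k) := rfl
  have hzk1 : alg.z (k + 1) = (WithLp.equiv 2 (E × F)).symm (alg.x (k+1), alg.y (k+1)) := rfl
  set zmid : WithLp 2 (E × F) := (WithLp.equiv 2 (E × F)).symm (alg.x (k+1), alg.y k)
    with hzmid
  -- x prox inequality
  have hpx := isMinOn_iff.mp (alg.s₁ k) (alg.x k) (Set.mem_univ _)
  rw [ck k] at hpx
  simp only [Pi.smul_apply, smul_eq_mul] at hpx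
  have e1 : alg.x (k+1) - (alg.x k - (1 / (γ * (l:ℝ))) • grad_fst H (alg.y k) (alg.x k))
      = (alg.x (k+1) - alg.x k) + (1 / (γ * (l:ℝ))) • grad_fst H (alg.y k) (alg.x k) := by
    abel
  have e2 : alg.x k - (alg.x k - (1 / (γ * (l:ℝ))) • grad_fst H (alg.y k) (alg.x k))
      = (1 / (γ * (l:ℝ))) • grad_fst H (alg.y k) (alg.x k) := by abel
  rw [e1, e2, norm_add_sq_real, real_inner_smul_right] at hpx
  -- x descent
  have hdx := my_descent_lemma alg.conf alg.lip (alg.z k) zmid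
  have hsubx : zmid - alg.z k
      = (WithLp.equiv 2 (E × F)).symm (alg.x (k+1) - alg.x k, 0) := by
    rw [hzmid, hzk, WithLp.equiv_symm_apply, ← WithLp.toLp_sub, Prod.mk_sub_mk, sub_self]
  have hinx : ⟪gradient H (alg.z k), zmid - alg.z k⟫
      = ⟪alg.x (k+1) - alg.x k, grad_fst H (alg.y k) (alg.x k)⟫ := by
    rw [hsubx, WithLp.prod_inner_apply, WithLp.equiv_symm_apply, WithLp.ofLp_toLp,
      inner_zero_right, add_zero, my_grad_fst_eq alg.conf, ← hzk]
    exact real_inner_comm _ _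
  have hnx : ‖zmid - alg.z k‖ ^ 2 = ‖alg.x (k+1) - alg.x k‖ ^ 2 := by
    rw [hsubx, WithLp.prod_norm_sq_eq_of_L2, WithLp.equiv_symm_apply, WithLp.toLp_fst, WithLp.toLp_snd,
      norm_zero]
    ring
  rw [hinx, hnx] at hdx
  have hIx := my_real_combine hc hkey hpx hdx
  -- y prox inequality
  have hpy := isMinOn_iff.mp (alg.s₂ k) (alg.y k) (Set.mem_univ _)
  rw [dk k] at hpy
  simp only [Pi.smul_apply, smul_eq_mul] at hpy
  have e3 : alg.y (k+1) - (alg.y k - (1 / (γ * (l:ℝ))) • grad_snd H (alg.x (k+1)) (alg.y k))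
      = (alg.y (k+1) - alg.y k) + (1 / (γ * (l:ℝ))) • grad_snd H (alg.x (k+1)) (alg.y k) := by
    abel
  have e4 : alg.y k - (alg.y k - (1 / (γ * (l:ℝ))) • grad_snd H (alg.x (k+1)) (alg.y k))
      = (1 / (γ * (l:ℝ))) • grad_snd H (alg.x (k+1)) (alg.y k) := by abel
  rw [e3, e4, norm_add_sq_real, real_inner_smul_right] at hpy
  -- y descent
  have hdy := my_descent_lemma alg.conf alg.lip zmid (alg.z (k+1))
  have hsuby : alg.z (k+1) - zmid
      = (WithLp.equiv 2 (E × F)).symm (0, alg.y (k+1) - alg.y k) := by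
    rw [hzmid, hzk1, WithLp.equiv_symm_apply, ← WithLp.toLp_sub, Prod.mk_sub_mk, sub_self]
  have hiny : ⟪gradient H zmid, alg.z (k+1) - zmid⟫
      = ⟪alg.y (k+1) - alg.y k, grad_snd H (alg.x (k+1)) (alg.y k)⟫ := by
    rw [hsuby, WithLp.prod_inner_apply, WithLp.equiv_symm_apply, WithLp.ofLp_toLp,
      inner_zero_right, my_grad_snd_eq alg.conf, ← hzmid, zero_add]
    exact real_inner_comm _ _
  have hny : ‖alg.z (k+1) - zmid‖ ^ 2 = ‖alg.y (k+1) - alg.y k‖ ^ 2 := by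
    rw [hsuby, WithLp.prod_norm_sq_eq_of_L2, WithLp.equiv_symm_apply, WithLp.toLp_fst, WithLp.toLp_snd,
      norm_zero]
    ring
  rw [hiny, hny] at hdy
  have hIy := my_real_combine hc hkey hpy hdy
  -- combine
  have hψ0 : alg.ψ (alg.z k) = f (alg.x k) + g (alg.y k) + H (alg.z k) := by
    simp [BCD.ψ, hzk]
  have hψ1 : alg.ψ (alg.z (k+1)) = f (alg.x (k+1)) + g (alg.y (k+1)) + H (alg.z (k+1)) := by
    simp [BCD.ψ, hzk1]
  have hnz : ‖alg.z (k+1) - alg.z k‖ ^ 2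
      = ‖alg.x (k+1) - alg.x k‖ ^ 2 + ‖alg.y (k+1) - alg.y k‖ ^ 2 := by
    have hs : alg.z (k+1) - alg.z k = (WithLp.equiv 2 (E × F)).symm
        (alg.x (k+1) - alg.x k, alg.y (k+1) - alg.y k) := by
      rw [hzk1, hzk, WithLp.equiv_symm_apply, ← WithLp.toLp_sub, Prod.mk_sub_mk]
    rw [hs, WithLp.prod_norm_sq_eq_of_L2, WithLp.equiv_symm_apply, WithLp.toLp_fst, WithLp.toLp_snd]
  rw [hψ0, hψ1, hnz]
  nlinarith [hIx, hIy]


theorem Sufficient_Descent2 {E : Type*} [NormedAddCommGroup E] [InnerProductSpace ℝ E]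
    [CompleteSpace E] {F : Type*} [NormedAddCommGroup F] [InnerProductSpace ℝ F]
    [CompleteSpace F] {f : E → ℝ} {g : F → ℝ} {H : WithLp 2 (E × F) → ℝ} {l : NNReal}
    {x0 : E} {y0 : F} (alg : BCD f g H l x0 y0) (γ : ℝ) (hγ : γ > 1)
    (ck : ∀ k, alg.c k = 1 / (γ * l)) (dk : ∀ k, alg.d k = 1 / (γ * l))
    (lbdψ : BddBelow (alg.ψ '' Set.univ)) :
    Tendsto (fun k => ‖alg.z (k + 1) - alg.z k‖) atTop (𝓝 0) ∧
      Summable (fun k => ‖alg.z (k + 1) - alg.z k‖ ^ 2) := by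
  have hl : (0 : ℝ) < l := alg.lpos
  have hρ : (0 : ℝ) < (γ - 1) * (l : ℝ) / 2 := by
    have : (0:ℝ) < γ - 1 := by linarith
    positivity
  have hstep := my_step alg γ hγ ck dk
  obtain ⟨B, hB⟩ := lbdψ
  have hlb : ∀ n, B ≤ alg.ψ (alg.z n) := fun n => hB ⟨alg.z n, Set.mem_univ _, rfl⟩
  have hsum_le : ∀ n, ∑ k ∈ Finset.range n,
      ((γ - 1) * (l : ℝ) / 2) * ‖alg.z (k + 1) - alg.z k‖ ^ 2 ≤ alg.ψ (alg.z 0) - B := by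
    intro n
    have htel : ∑ k ∈ Finset.range n, (alg.ψ (alg.z k) - alg.ψ (alg.z (k + 1)))
        = alg.ψ (alg.z 0) - alg.ψ (alg.z n) := Finset.sum_range_sub' _ n
    calc ∑ k ∈ Finset.range n, ((γ - 1) * (l : ℝ) / 2) * ‖alg.z (k + 1) - alg.z k‖ ^ 2
        ≤ ∑ k ∈ Finset.range n, (alg.ψ (alg.z k) - alg.ψ (alg.z (k + 1))) :=
          Finset.sum_le_sum (fun k _ => by linarith [hstep k])
      _ = alg.ψ (alg.z 0) - alg.ψ (alg.z n) := htel
      _ ≤ alg.ψ (alg.z 0) - B := by linarith [hlb n]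
  have hsummable : Summable (fun k =>
      ((γ - 1) * (l : ℝ) / 2) * ‖alg.z (k + 1) - alg.z k‖ ^ 2) :=
    summable_of_sum_range_le (fun k => by positivity) hsum_le
  have hsum2 : Summable (fun k => ‖alg.z (k + 1) - alg.z k‖ ^ 2) :=
    (summable_mul_left_iff (ne_of_gt hρ)).mp hsummable
  refine ⟨?_, hsum2⟩
  have hten : Tendsto (fun k => ‖alg.z (k + 1) - alg.z k‖ ^ 2) atTop (𝓝 0) :=
    hsum2.tendsto_atTop_zero
  have h1 : Tendsto (fun k => Real.sqrt (‖alg.z (k + 1) - alg.z k‖ ^ 2)) atTop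
      (𝓝 (Real.sqrt 0)) := (Real.continuous_sqrt.tendsto 0).comp hten
  have h2 : (fun k => Real.sqrt (‖alg.z (k + 1) - alg.z k‖ ^ 2))
      = fun k => ‖alg.z (k + 1) - alg.z k‖ :=
    funext fun k => Real.sqrt_sq (norm_nonneg _)
  rw [h2, Real.sqrt_zero] at h1
  exact h1
end
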